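/- arXiv:0803.3309 — 4 statements merged into one kernel-verified Lean document; each statement's English description precedes it below -/
import Mathlib

section
/- Let k ∈ ℕ, k ≥ 1, and let φ ∈ C_c^∞(ℝ). For every x ∈ ℝ \ supp φ, the integral ∫_ℝ R^{(k,k)}(x,y) φ(y) dy converges absolutely and ((d/dx)+x)^k H^{-k/2} φ(x) = ∫_ℝ R^{(k,k)}(x,y) φ(y) dy. -/
open MeasureTheory Real Set Filter Topology

noncomputable section

/-- Modified Bessel function of the first kind of order `a`. -/
def besselI (a z : ℝ) : ℝ :=
  ∑' n : ℕ, (z / 2) ^ (2 * (n : ℝ) + a) / (Nat.factorial n * Real.Gamma ((n : ℝ) + a + 1))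

/-- The Laguerre heat kernel `W_t^α(x,y)`. -/
def laguerreHeat (a t x y : ℝ) : ℝ :=
  (2 * Real.exp (-t) / (1 - Real.exp (-2 * t))) ^ ((1 : ℝ) / 2) *
    (2 * x * y * Real.exp (-t) / (1 - Real.exp (-2 * t))) ^ ((1 : ℝ) / 2) *
    besselI a (2 * x * y * Real.exp (-t) / (1 - Real.exp (-2 * t))) *
    Real.exp (-((1 / 2) * (x ^ 2 + y ^ 2) * ((1 + Real.exp (-2 * t)) / (1 - Real.exp (-2 * t)))))

/-- The first-order Laguerre derivative operator `𝔇_α f = f' + (x - (α+1/2)/x) f`. -/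
def Dop (a : ℝ) (f : ℝ → ℝ) : ℝ → ℝ :=
  fun x => deriv f x + (x - (a + 1 / 2) / x) * f x

/-- The `k`-th Laguerre Riesz kernel `R_α^{(k)}(x,y)`. -/
def rieszKernelL (a : ℝ) (k : ℕ) (x y : ℝ) : ℝ :=
  (1 / Real.Gamma ((k : ℝ) / 2)) *
    ∫ t in Set.Ioi (0 : ℝ),
      t ^ ((k : ℝ) / 2 - 1) * ((Dop a)^[k] (fun u => laguerreHeat a t u y)) x

/-- The kernel `K_{α,k}(x,y)` of the negative power `L_α^{-k/2}`. -/
def laguerreK (a : ℝ) (k : ℕ) (x y : ℝ) : ℝ :=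
  (1 / Real.Gamma ((k : ℝ) / 2)) *
    ∫ t in Set.Ioi (0 : ℝ), t ^ ((k : ℝ) / 2 - 1) * laguerreHeat a t x y

/-- The negative power `L_α^{-k/2}` of the Laguerre operator, on test functions. -/
def Linv (a : ℝ) (k : ℕ) (φ : ℝ → ℝ) (x : ℝ) : ℝ :=
  ∫ y in Set.Ioi (0 : ℝ), laguerreK a k x y * φ y

/-- The Hermite heat kernel `W_t(x,y)`. -/
def hermiteHeat (t x y : ℝ) : ℝ :=
  (Real.exp (-t) / (1 - Real.exp (-2 * t))) ^ ((1 : ℝ) / 2) / Real.sqrt Real.pi *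
    Real.exp (-((1 / 2) * (x ^ 2 + y ^ 2) * ((1 + Real.exp (-2 * t)) / (1 - Real.exp (-2 * t)))) +
      2 * x * y * Real.exp (-t) / (1 - Real.exp (-2 * t)))

/-- The first-order Hermite derivative operator `f ↦ f' + x f`. -/
def Dh (f : ℝ → ℝ) : ℝ → ℝ := fun x => deriv f x + x * f x

/-- The `k`-th Hermite Riesz kernel `R^{(k)}(x,y)`. -/
def rieszKernelH (k : ℕ) (x y : ℝ) : ℝ :=
  (1 / Real.Gamma ((k : ℝ) / 2)) *
    ∫ t in Set.Ioi (0 : ℝ), t ^ ((k : ℝ) / 2 - 1) * (Dh^[k] (fun u => hermiteHeat t u y)) x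

/-- The intermediate Hermite kernel `R^{(k,l)}(x,y)`. -/
def rieszKernelHl (k l : ℕ) (x y : ℝ) : ℝ :=
  (1 / Real.Gamma ((k : ℝ) / 2)) *
    ∫ t in Set.Ioi (0 : ℝ), t ^ ((k : ℝ) / 2 - 1) * (Dh^[l] (fun u => hermiteHeat t u y)) x

/-- The kernel `K_k(x,y)` of the negative power `H^{-k/2}`. -/
def hermiteK (k : ℕ) (x y : ℝ) : ℝ :=
  (1 / Real.Gamma ((k : ℝ) / 2)) *
    ∫ t in Set.Ioi (0 : ℝ), t ^ ((k : ℝ) / 2 - 1) * hermiteHeat t x y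

/-- The negative power `H^{-k/2}` of the Hermite operator, on test functions. -/
def Hinv (k : ℕ) (φ : ℝ → ℝ) (x : ℝ) : ℝ := ∫ y, hermiteK k x y * φ y

/-- The measure on `(0,∞)` with density `x^δ` with respect to Lebesgue measure. -/
def weightedMeasure (δ : ℝ) : Measure ℝ :=
  (volume.restrict (Set.Ioi 0)).withDensity fun x => ENNReal.ofReal (x ^ δ)

/-- The constant `E_{N,l} = 2^{N-2l} N! / (l! (N-2l)!)`. -/
def Econst (N l : ℕ) : ℝ :=
  2 ^ (N - 2 * l) * Nat.factorial N / (Nat.factorial l * Nat.factorial (N - 2 * l))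

/-- The Hankel symbol `[b,r]`. -/
def hankel (b : ℝ) (r : ℕ) : ℝ :=
  (∏ i ∈ Finset.range r, (4 * b ^ 2 - (2 * (i : ℝ) + 1) ^ 2)) /
    (2 ^ (2 * r) * Nat.factorial r)

/-- The function `Φ` from the proof of the Hermite principal value result. -/
def Phi (k : ℕ) (x : ℝ) : ℝ :=
  (1 / Real.Gamma ((k : ℝ) / 2)) *
    ∫ s in Set.Ioo (0 : ℝ) (1 / 2),
      ((2 * s) ^ ((k : ℝ) / 2 - 1) / Real.sqrt (Real.pi * s)) *
        iteratedDeriv (k - 1) (fun u : ℝ => Real.exp (-u ^ 2 / (4 * s))) x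

end

/-!
Conjugation by the Gaussian gives `d/dx + x = e^{-x²/2} ∘ d/dx ∘ e^{x²/2}`, and `e^{x²/2} W_t(x, y)`
is a Gaussian in `x` centred at `y e^t`, so `(d/dx + x)^l W_t(·, y)` is `e^{-x²/2}` times a Hermite
polynomial times that Gaussian. With `v = (1 - e^{-2t})⁻¹`, the prefactors are `O(e^{-t/2} v^{l+1})`; when `x` and `y`
are bounded and `δ`-apart, the Gaussian factor is `O(exp(-δ² v / 8))` for small `t` and `v` is
bounded for large `t`. Hence `t^{k/2-1} (d/dx + x)^l W_t(x, y)` is dominated by `t^{k/2-1} e^{-t/2}`,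
integrable when `k ≥ 1`, locally uniformly in `x` away from `supp φ`; differentiating under both
integrals `k` times, one `d/dx + x` at a time, gives the formula.
-/

open scoped ContDiff
open Polynomial

noncomputable section

lemma hasDerivAt_Dh_sub_mul {f : ℝ → ℝ} {x : ℝ} (hf : DifferentiableAt ℝ f x) :
    HasDerivAt f (Dh f x - x * f x) x := by
  simpa [Dh] using hf.hasDerivAt

lemma contDiff_iterate_Dh {f : ℝ → ℝ} (hf : ContDiff ℝ ∞ f) (l : ℕ) :
    ContDiff ℝ ∞ (Dh^[l] f) := by
  induction l with
  | zero => exact hf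
  | succ l ih =>
    rw [Function.iterate_succ_apply']
    exact (contDiff_infty_iff_deriv.1 ih).2.add (contDiff_id.mul ih)

lemma Dh_exp_neg_sq_mul {f : ℝ → ℝ} (hf : Differentiable ℝ f) :
    Dh (fun x => exp (-(x ^ 2 / 2)) * f x) = fun x => exp (-(x ^ 2 / 2)) * deriv f x := by
  funext x
  have hg : HasDerivAt (fun x => exp (-(x ^ 2 / 2))) (-x * exp (-(x ^ 2 / 2))) x := by
    simpa [mul_comm] using (((hasDerivAt_pow 2 x).div_const 2).neg).exp
  show deriv (fun x => exp (-(x ^ 2 / 2)) * f x) x + x * (exp (-(x ^ 2 / 2)) * f x) = _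
  rw [(hg.fun_mul (hf x).hasDerivAt).deriv]
  ring

lemma iterate_Dh_exp_neg_sq_mul {f : ℝ → ℝ} (hf : ContDiff ℝ ∞ f) (l : ℕ) :
    Dh^[l] (fun x => exp (-(x ^ 2 / 2)) * f x) =
      fun x => exp (-(x ^ 2 / 2)) * iteratedDeriv l f x := by
  induction l with
  | zero => rfl
  | succ l ih =>
    have hd := hf.differentiable_iteratedDeriv l (by exact_mod_cast WithTop.coe_lt_top _)
    rw [Function.iterate_succ_apply', ih, Dh_exp_neg_sq_mul hd, iteratedDeriv_succ]

lemma iteratedDeriv_exp_neg_sq_mul_sub (l : ℕ) (b m x : ℝ) :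
    iteratedDeriv l (fun u => exp (-((b * (u - m)) ^ 2 / 2))) x =
      (-1) ^ l * b ^ l * aeval (b * (x - m)) (hermite l) * exp (-((b * (x - m)) ^ 2 / 2)) := by
  have hgauss : ContDiff ℝ l (fun v : ℝ => exp (-(v ^ 2 / 2))) := by fun_prop
  rw [iteratedDeriv_comp_sub_const (f := fun v => exp (-((b * v) ^ 2 / 2))),
    iteratedDeriv_comp_const_mul hgauss]
  dsimp only
  rw [iteratedDeriv_eq_iterate, deriv_gaussian_eq_hermite_mul_gaussian]
  ring

def heatCoeff (t : ℝ) : ℝ := (exp (-t) / (1 - exp (-2 * t))) ^ ((1 : ℝ) / 2) / sqrt π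

def heatScale (t : ℝ) : ℝ := sqrt (2 * exp (-2 * t) / (1 - exp (-2 * t)))

lemma one_sub_exp_neg_two_mul_pos {t : ℝ} (ht : 0 < t) : 0 < 1 - exp (-2 * t) := by
  have : exp (-2 * t) < 1 := exp_lt_one_iff.2 (by linarith)
  linarith

lemma hermiteHeat_eq {t : ℝ} (ht : 0 < t) (x y : ℝ) :
    hermiteHeat t x y = exp (-(x ^ 2 / 2)) *
      (heatCoeff t * exp (y ^ 2 / 2) * exp (-((heatScale t * (x - y * exp t)) ^ 2 / 2))) := by
  have hu := one_sub_exp_neg_two_mul_pos ht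
  have hsq : heatScale t ^ 2 = 2 * exp (-2 * t) / (1 - exp (-2 * t)) :=
    sq_sqrt (by positivity)
  have hE2 : exp (-2 * t) = exp (-t) ^ 2 := by rw [← exp_nat_mul]; ring_nf
  have hEt : exp t = (exp (-t))⁻¹ := by rw [exp_neg, inv_inv]
  rw [hermiteHeat, heatCoeff,
    show ∀ a b c d : ℝ, exp a * (c * exp b * exp d) = c * exp (a + b + d) from
      fun a b c d => by rw [exp_add, exp_add]; ring,
    mul_pow, hsq, hEt]
  rw [hE2] at hu ⊢
  congr 2
  field_simp
  ring

def hermiteHeatDhIter (l : ℕ) (t x y : ℝ) : ℝ :=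
  exp (-(x ^ 2 / 2)) * (heatCoeff t * exp (y ^ 2 / 2) *
    ((-1) ^ l * heatScale t ^ l * aeval (heatScale t * (x - y * exp t)) (hermite l) *
      exp (-((heatScale t * (x - y * exp t)) ^ 2 / 2))))

lemma iterate_Dh_hermiteHeat {t : ℝ} (ht : 0 < t) (l : ℕ) (y : ℝ) :
    Dh^[l] (fun u => hermiteHeat t u y) = fun x => hermiteHeatDhIter l t x y := by
  have hgauss : ContDiff ℝ ∞ fun u => heatCoeff t * exp (y ^ 2 / 2) *
      exp (-((heatScale t * (u - y * exp t)) ^ 2 / 2)) := by fun_prop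
  simp_rw [hermiteHeat_eq ht, iterate_Dh_exp_neg_sq_mul hgauss, iteratedDeriv_const_mul_field,
    iteratedDeriv_exp_neg_sq_mul_sub, hermiteHeatDhIter]

lemma contDiff_hermiteHeat (t y : ℝ) : ContDiff ℝ ∞ fun x => hermiteHeat t x y := by
  unfold hermiteHeat
  fun_prop

lemma continuousOn_heatCoeff : ContinuousOn heatCoeff (Ioi 0) := by
  intro t ht
  have := (one_sub_exp_neg_two_mul_pos ht).ne'
  unfold heatCoeff
  fun_prop (disch := first | assumption | norm_num)

lemma continuousOn_heatScale : ContinuousOn heatScale (Ioi 0) := by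
  intro t ht
  have := (one_sub_exp_neg_two_mul_pos ht).ne'
  unfold heatScale
  fun_prop (disch := assumption)

lemma continuousOn_hermiteHeatDhIter (l : ℕ) (x : ℝ) :
    ContinuousOn (fun p : ℝ × ℝ => hermiteHeatDhIter l p.2 x p.1) (univ ×ˢ Ioi 0) := by
  have hc : ContinuousOn (fun p : ℝ × ℝ => heatCoeff p.2) (univ ×ˢ Ioi 0) :=
    continuousOn_heatCoeff.comp continuousOn_snd fun p hp => (mem_prod.1 hp).2
  have hb : ContinuousOn (fun p : ℝ × ℝ => heatScale p.2) (univ ×ˢ Ioi 0) :=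
    continuousOn_heatScale.comp continuousOn_snd fun p hp => (mem_prod.1 hp).2
  unfold hermiteHeatDhIter
  fun_prop

section Decay

open scoped Nat

lemma abs_eval_le_mul_exp_sq (q : ℝ[X]) :
    ∃ C, 0 ≤ C ∧ ∀ z, |q.eval z| ≤ C * exp (z ^ 2 / 4) := by
  refine ⟨exp 1 * ∑ i ∈ Finset.range (q.natDegree + 1), |q.coeff i| * i !, by positivity,
    fun z => ?_⟩
  have hexp : exp |z| ≤ exp 1 * exp (z ^ 2 / 4) := by
    rw [← exp_add]
    exact exp_le_exp.2 (by nlinarith [sq_abs z, sq_nonneg (|z| - 2)])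
  rw [eval_eq_sum_range, Finset.mul_sum, Finset.sum_mul]
  refine (Finset.abs_sum_le_sum_abs _ _).trans (Finset.sum_le_sum fun i _ => ?_)
  have hpow : |z| ^ i ≤ i ! * exp |z| := by
    have := pow_div_factorial_le_exp |z| (abs_nonneg z) i
    rwa [div_le_iff₀ (by positivity), mul_comm] at this
  calc |q.coeff i * z ^ i| = |q.coeff i| * |z| ^ i := by rw [abs_mul, abs_pow]
    _ ≤ |q.coeff i| * (i ! * (exp 1 * exp (z ^ 2 / 4))) := by
      gcongr
      exact hpow.trans (by gcongr)
    _ = _ := by ring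

lemma pow_mul_exp_neg_mul_le {w v : ℝ} (hw : 0 < w) (hv : 0 ≤ v) (n : ℕ) :
    v ^ n * exp (-(w * v)) ≤ n ! / w ^ n := by
  have h := pow_div_factorial_le_exp (w * v) (mul_nonneg hw.le hv) n
  rw [div_le_iff₀ (by positivity), mul_pow] at h
  rw [exp_neg, ← div_eq_mul_inv, div_le_div_iff₀ (exp_pos _) (by positivity)]
  linarith

section HeatFactors

variable {t : ℝ} (ht : 0 < t)
include ht

lemma one_le_inv_one_sub_exp : 1 ≤ (1 - exp (-2 * t))⁻¹ :=
  one_le_inv₀ (one_sub_exp_neg_two_mul_pos ht) |>.2 (by linarith [exp_pos (-2 * t)])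

lemma heatCoeff_le : heatCoeff t ≤ exp (-(t / 2)) * (1 - exp (-2 * t))⁻¹ := by
  have hu := one_sub_exp_neg_two_mul_pos ht
  have hv := one_le_inv_one_sub_exp ht
  calc heatCoeff t ≤ (exp (-t) / (1 - exp (-2 * t))) ^ ((1 : ℝ) / 2) :=
        div_le_self (by positivity) (one_le_sqrt.2 (by linarith [pi_gt_three]))
    _ = exp (-(t / 2)) * (1 - exp (-2 * t))⁻¹ ^ ((1 : ℝ) / 2) := by
        rw [div_eq_mul_inv, mul_rpow (exp_pos _).le (by positivity), ← exp_mul]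
        ring_nf
    _ ≤ exp (-(t / 2)) * (1 - exp (-2 * t))⁻¹ := by
        gcongr
        exact rpow_le_self_of_one_le hv (by norm_num)

lemma heatScale_le : heatScale t ≤ 2 * (1 - exp (-2 * t))⁻¹ := by
  have hu := one_sub_exp_neg_two_mul_pos ht
  have hv := one_le_inv_one_sub_exp ht
  have hE : exp (-2 * t) ≤ 1 := exp_le_one_iff.2 (by linarith)
  rw [heatScale, sqrt_le_left (by positivity), div_eq_mul_inv]
  nlinarith [exp_pos (-2 * t)]

lemma sq_heatScale_mul (x y : ℝ) :
    (heatScale t * (x - y * exp t)) ^ 2 = 2 * (x * exp (-t) - y) ^ 2 * (1 - exp (-2 * t))⁻¹ := by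
  have hu := one_sub_exp_neg_two_mul_pos ht
  have hE2 : exp (-2 * t) = exp (-t) ^ 2 := by rw [← exp_nat_mul]; ring_nf
  have hEt : exp t = (exp (-t))⁻¹ := by rw [exp_neg, inv_inv]
  rw [mul_pow, heatScale, sq_sqrt (by positivity), hEt]
  rw [hE2] at hu ⊢
  field_simp

lemma inv_pow_mul_exp_neg_le {x y δ R : ℝ} (hδ : 0 < δ) (hx : |x| ≤ R) (hxy : δ ≤ |x - y|)
    (n : ℕ) :
    (1 - exp (-2 * t))⁻¹ ^ n * exp (-((heatScale t * (x - y * exp t)) ^ 2 / 4)) ≤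
      n ! / (δ ^ 2 / 8) ^ n + (2 * R / δ) ^ n := by
  have hu := one_sub_exp_neg_two_mul_pos ht
  have hv := one_le_inv_one_sub_exp ht
  set v := (1 - exp (-2 * t))⁻¹
  have hR : 0 ≤ R := (abs_nonneg x).trans hx
  have hE : exp (-t) ≤ 1 := exp_le_one_iff.2 (by linarith)
  rw [sq_heatScale_mul ht]
  rcases le_or_gt (R * (1 - exp (-2 * t))) (δ / 2) with hsmall | hlarge
  · -- `x e^{-t}` moves by at most `R (1 - e^{-2t}) ≤ δ / 2`, so it stays `δ / 2`-away from `y`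
    have hshift : δ / 2 ≤ |x * exp (-t) - y| := by
      have hE2 : exp (-2 * t) ≤ exp (-t) := exp_le_exp.2 (by linarith)
      have h1 : |x - x * exp (-t)| ≤ R * (1 - exp (-2 * t)) := by
        rw [show x - x * exp (-t) = x * (1 - exp (-t)) by ring, abs_mul,
          abs_of_nonneg (a := 1 - exp (-t)) (by linarith)]
        exact mul_le_mul hx (by linarith) (by linarith) ((abs_nonneg x).trans hx)
      have h2 := abs_sub_le x (x * exp (-t)) y
      linarith
    have hsq : δ ^ 2 / 4 ≤ (x * exp (-t) - y) ^ 2 := by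
      nlinarith [sq_abs (x * exp (-t) - y)]
    calc v ^ n * exp (-(2 * (x * exp (-t) - y) ^ 2 * v / 4))
        ≤ v ^ n * exp (-(δ ^ 2 / 8 * v)) := by
          gcongr
          nlinarith
      _ ≤ n ! / (δ ^ 2 / 8) ^ n := pow_mul_exp_neg_mul_le (by positivity) (by linarith) n
      _ ≤ _ := le_add_of_nonneg_right (pow_nonneg (div_nonneg (by linarith) hδ.le) n)
  · have hvR : v ≤ 2 * R / δ := by
      rw [le_div_iff₀ hδ]
      calc v * δ ≤ v * (2 * (R * (1 - exp (-2 * t)))) :=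
            mul_le_mul_of_nonneg_left (by linarith) (by linarith)
        _ = 2 * R * (v * (1 - exp (-2 * t))) := by ring
        _ = 2 * R := by rw [inv_mul_cancel₀ hu.ne', mul_one]
    calc v ^ n * exp (-(2 * (x * exp (-t) - y) ^ 2 * v / 4)) ≤ (2 * R / δ) ^ n * 1 := by
          gcongr
          exact exp_le_one_iff.2 (by nlinarith [sq_nonneg (x * exp (-t) - y)])
      _ ≤ _ := by rw [mul_one]; exact le_add_of_nonneg_left (by positivity)

end HeatFactors

lemma exists_abs_iterate_Dh_hermiteHeat_le (l : ℕ) {δ R : ℝ} (hδ : 0 < δ) :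
    ∃ M, ∀ t x y, 0 < t → |x| ≤ R → |y| ≤ R → δ ≤ |x - y| →
      |Dh^[l] (fun u => hermiteHeat t u y) x| ≤ M * exp (-(t / 2)) := by
  obtain ⟨C, hC, hH⟩ := abs_eval_le_mul_exp_sq ((hermite l).map (Int.castRingHom ℝ))
  refine ⟨C * exp (R ^ 2 / 2) * 2 ^ l *
    ((l + 1)! / (δ ^ 2 / 8) ^ (l + 1) + (2 * R / δ) ^ (l + 1)), fun t x y ht hx hy hxy => ?_⟩
  rw [iterate_Dh_hermiteHeat ht]
  set s := heatScale t * (x - y * exp t)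
  have hu := one_sub_exp_neg_two_mul_pos ht
  have hc : 0 ≤ heatCoeff t :=
    div_nonneg (rpow_nonneg (div_nonneg (exp_pos _).le hu.le) _) (sqrt_nonneg _)
  set v := (1 - exp (-2 * t))⁻¹
  have hv : 0 ≤ v := inv_nonneg.2 hu.le
  have hb : 0 ≤ heatScale t := sqrt_nonneg _
  have hweight : exp (-(x ^ 2 / 2)) * exp (y ^ 2 / 2) ≤ exp (R ^ 2 / 2) := by
    rw [← exp_add]
    gcongr
    nlinarith [sq_abs x, sq_abs y, abs_nonneg y]
  have hcoef : heatCoeff t * heatScale t ^ l ≤ exp (-(t / 2)) * 2 ^ l * v ^ (l + 1) :=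
    calc heatCoeff t * heatScale t ^ l ≤ exp (-(t / 2)) * v * (2 * v) ^ l :=
          mul_le_mul (heatCoeff_le ht) (pow_le_pow_left₀ hb (heatScale_le ht) l)
            (by positivity) (by positivity)
      _ = _ := by ring
  have hgauss : |aeval s (hermite l)| * exp (-(s ^ 2 / 2)) ≤ C * exp (-(s ^ 2 / 4)) := by
    have hHs : |aeval s (hermite l)| ≤ C * exp (s ^ 2 / 4) := by
      simpa [aeval_def, eval_map] using hH s
    calc |aeval s (hermite l)| * exp (-(s ^ 2 / 2))
        ≤ C * exp (s ^ 2 / 4) * exp (-(s ^ 2 / 2)) :=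
          mul_le_mul_of_nonneg_right hHs (exp_pos _).le
      _ = C * exp (-(s ^ 2 / 4)) := by rw [mul_assoc, ← exp_add]; ring_nf
  calc |hermiteHeatDhIter l t x y| = exp (-(x ^ 2 / 2)) * exp (y ^ 2 / 2) *
        (heatCoeff t * heatScale t ^ l) * (|aeval s (hermite l)| * exp (-(s ^ 2 / 2))) := by
        simp only [hermiteHeatDhIter, abs_mul, abs_pow, abs_neg, abs_one, one_pow, abs_exp,
          abs_of_nonneg hc, abs_of_nonneg hb]
        ring
    _ ≤ exp (R ^ 2 / 2) * (exp (-(t / 2)) * 2 ^ l * v ^ (l + 1)) * (C * exp (-(s ^ 2 / 4))) :=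
        mul_le_mul (mul_le_mul hweight hcoef (by positivity) (exp_pos _).le) hgauss
          (by positivity) (by positivity)
    _ = C * exp (R ^ 2 / 2) * 2 ^ l * (v ^ (l + 1) * exp (-(s ^ 2 / 4))) * exp (-(t / 2)) := by
        ring
    _ ≤ _ := by
        gcongr
        exact inv_pow_mul_exp_neg_le ht hδ hx hxy (l + 1)

end Decay

section Ladder

-- `F` is a ladder for `Dh`: `(∂_z + z) (F l) = F (l + 1)`.

variable {α : Type*} [MeasurableSpace α] {μ : Measure α} {F : ℕ → ℝ → α → ℝ} {U : Set ℝ}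
  {g : α → ℝ} {C : ℕ → ℝ}

lemma integrable_of_ladder (hg : Integrable g μ)
    (hmeas : ∀ l, ∀ z ∈ U, AEStronglyMeasurable (F l z) μ)
    (hbound : ∀ l, ∀ᵐ a ∂μ, ∀ z ∈ U, ‖F l z a‖ ≤ C l * g a) (l : ℕ) {z : ℝ} (hz : z ∈ U) :
    Integrable (F l z) μ :=
  (hg.const_mul (C l)).mono' (hmeas l z hz) (by filter_upwards [hbound l] with a ha using ha z hz)

variable (hU : IsOpen U) {B : ℝ} (hB : ∀ z ∈ U, |z| ≤ B) (hg : Integrable g μ)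
  (hmeas : ∀ l, ∀ z ∈ U, AEStronglyMeasurable (F l z) μ)
  (hbound : ∀ l, ∀ᵐ a ∂μ, ∀ z ∈ U, ‖F l z a‖ ≤ C l * g a)
  (hderiv : ∀ l, ∀ᵐ a ∂μ, ∀ z ∈ U, HasDerivAt (F l · a) (F (l + 1) z a - z * F l z a) z)
include hU hB hg hmeas hbound hderiv

lemma hasDerivAt_integral_of_ladder (l : ℕ) {z : ℝ} (hz : z ∈ U) :
    HasDerivAt (fun z => ∫ a, F l z a ∂μ) ((∫ a, F (l + 1) z a ∂μ) - z * ∫ a, F l z a ∂μ) z := by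
  have hint := integrable_of_ladder hg hmeas hbound
  have hF'bound : ∀ᵐ a ∂μ, ∀ w ∈ U,
      ‖F (l + 1) w a - w * F l w a‖ ≤ (C (l + 1) + B * C l) * g a := by
    filter_upwards [hbound l, hbound (l + 1)] with a hl hl1 w hw
    calc ‖F (l + 1) w a - w * F l w a‖ ≤ ‖F (l + 1) w a‖ + |w| * ‖F l w a‖ := by
          rw [← Real.norm_eq_abs, ← norm_mul]
          exact norm_sub_le _ _
      _ ≤ C (l + 1) * g a + B * (C l * g a) :=
          add_le_add (hl1 w hw)
            (mul_le_mul (hB w hw) (hl w hw) (norm_nonneg _) ((abs_nonneg w).trans (hB w hw)))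
      _ = _ := by ring
  have key := hasDerivAt_integral_of_dominated_loc_of_deriv_le (hU.mem_nhds hz)
    (eventually_of_mem (hU.mem_nhds hz) (hmeas l)) (hint l hz)
    ((hmeas (l + 1) z hz).sub ((hmeas l z hz).const_mul z)) hF'bound
    (hg.const_mul _) (hderiv l)
  rw [integral_sub (hint (l + 1) hz) ((hint l hz).const_mul z), integral_const_mul] at key
  exact key.2

lemma iterate_Dh_integral_of_ladder (l : ℕ) {z : ℝ} (hz : z ∈ U) :
    Dh^[l] (fun z => ∫ a, F 0 z a ∂μ) z = ∫ a, F l z a ∂μ := by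
  induction l generalizing z with
  | zero => rfl
  | succ l ih =>
    have hev : Dh^[l] (fun z => ∫ a, F 0 z a ∂μ) =ᶠ[𝓝 z] fun z => ∫ a, F l z a ∂μ :=
      eventually_of_mem (hU.mem_nhds hz) fun w hw => ih hw
    rw [Function.iterate_succ_apply']
    change deriv _ z + z * _ = _
    rw [hev.deriv_eq,
      (hasDerivAt_integral_of_ladder hU hB hg hmeas hbound hderiv l hz).deriv, ih hz]
    ring

end Ladder

lemma integrableOn_rpow_mul_exp_neg_half {c : ℝ} (hc : -1 < c) :
    IntegrableOn (fun t => t ^ c * exp (-(t / 2))) (Ioi 0) := by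
  refine (integrableOn_rpow_mul_exp_neg_mul_rpow hc one_pos
    (by norm_num : (0 : ℝ) < 1 / 2)).congr_fun (fun t _ => ?_) measurableSet_Ioi
  simp only [rpow_one]
  ring_nf

lemma continuousOn_iterate_Dh_hermiteHeat (l : ℕ) (x : ℝ) :
    ContinuousOn (fun p : ℝ × ℝ => Dh^[l] (fun u => hermiteHeat p.2 u p.1) x) (univ ×ˢ Ioi 0) :=
  (continuousOn_hermiteHeatDhIter l x).congr fun p hp =>
    congrFun (iterate_Dh_hermiteHeat (mem_prod.1 hp).2 l p.1) x

lemma aestronglyMeasurable_rieszIntegrand (c : ℝ) (l : ℕ) (z y : ℝ) :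
    AEStronglyMeasurable (fun t => t ^ c * Dh^[l] (fun u => hermiteHeat t u y) z)
      (volume.restrict (Ioi 0)) := by
  refine ContinuousOn.aestronglyMeasurable ?_ measurableSet_Ioi
  refine (continuousOn_id.rpow_const fun t ht => Or.inl (ne_of_gt ht)).mul ?_
  exact (continuousOn_iterate_Dh_hermiteHeat l z).comp (f := fun t : ℝ => (y, t)) (by fun_prop)
    fun t ht => ⟨trivial, ht⟩

lemma aestronglyMeasurable_rieszKernelHl (k l : ℕ) (z : ℝ) :
    AEStronglyMeasurable (fun y => rieszKernelHl k l z y) volume := by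
  have h : AEStronglyMeasurable
      (fun p : ℝ × ℝ => p.2 ^ ((k : ℝ) / 2 - 1) * Dh^[l] (fun u => hermiteHeat p.2 u p.1) z)
      (volume.prod (volume.restrict (Ioi 0))) := by
    rw [← Measure.restrict_univ (μ := (volume : Measure ℝ)), Measure.prod_restrict]
    refine ContinuousOn.aestronglyMeasurable ?_ (MeasurableSet.univ.prod measurableSet_Ioi)
    refine (continuousOn_snd.rpow_const fun p hp => Or.inl (ne_of_gt (mem_prod.1 hp).2)).mul ?_
    exact continuousOn_iterate_Dh_hermiteHeat l z
  exact h.integral_prod_right'.const_mul _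

section RieszKernel

variable {k : ℕ} {δ R : ℝ}

lemma exists_norm_rieszIntegrand_le (hδ : 0 < δ) :
    ∃ M : ℕ → ℝ, ∀ l t z y, 0 < t → |z| ≤ R → |y| ≤ R → δ ≤ |z - y| →
      ‖t ^ ((k : ℝ) / 2 - 1) * Dh^[l] (fun u => hermiteHeat t u y) z‖ ≤
        M l * (t ^ ((k : ℝ) / 2 - 1) * exp (-(t / 2))) := by
  choose M hM using fun l => exists_abs_iterate_Dh_hermiteHeat_le l hδ (R := R)
  refine ⟨M, fun l t z y ht hz hy hzy => ?_⟩
  rw [norm_mul, norm_of_nonneg (rpow_nonneg ht.le _), Real.norm_eq_abs, mul_left_comm]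
  exact mul_le_mul_of_nonneg_left (hM l t z y ht hz hy hzy) (rpow_nonneg ht.le _)

lemma exists_abs_rieszKernelHl_le (hk : 1 ≤ k) (hδ : 0 < δ) :
    ∃ C : ℕ → ℝ, ∀ l z y, |z| ≤ R → |y| ≤ R → δ ≤ |z - y| → |rieszKernelHl k l z y| ≤ C l := by
  obtain ⟨M, hM⟩ := exists_norm_rieszIntegrand_le (k := k) (R := R) hδ
  have hg := integrableOn_rpow_mul_exp_neg_half (c := (k : ℝ) / 2 - 1)
    (by linarith [(Nat.one_le_cast.2 hk : (1 : ℝ) ≤ k)])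
  refine ⟨fun l => |1 / Gamma ((k : ℝ) / 2)| *
    (M l * ∫ t in Ioi 0, t ^ ((k : ℝ) / 2 - 1) * exp (-(t / 2))), fun l z y hz hy hzy => ?_⟩
  rw [rieszKernelHl, abs_mul]
  refine mul_le_mul_of_nonneg_left ?_ (abs_nonneg _)
  rw [← integral_const_mul, ← Real.norm_eq_abs]
  exact norm_integral_le_of_norm_le (hg.const_mul _)
    ((ae_restrict_iff' measurableSet_Ioi).2 (.of_forall fun t ht => hM l t z y ht hz hy hzy))

lemma hasDerivAt_rieszKernelHl (hk : 1 ≤ k) (hδ : 0 < δ) {U : Set ℝ} (hU : IsOpen U)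
    (hUR : ∀ z ∈ U, |z| ≤ R) {y : ℝ} (hy : |y| ≤ R) (hUy : ∀ z ∈ U, δ ≤ |z - y|)
    (l : ℕ) {z : ℝ} (hz : z ∈ U) :
    HasDerivAt (fun z => rieszKernelHl k l z y)
      (rieszKernelHl k (l + 1) z y - z * rieszKernelHl k l z y) z := by
  obtain ⟨M, hM⟩ := exists_norm_rieszIntegrand_le (k := k) (R := R) hδ
  have hg := integrableOn_rpow_mul_exp_neg_half (c := (k : ℝ) / 2 - 1)
    (by linarith [(Nat.one_le_cast.2 hk : (1 : ℝ) ≤ k)])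
  have h := hasDerivAt_integral_of_ladder
    (F := fun l z t => t ^ ((k : ℝ) / 2 - 1) * Dh^[l] (fun u => hermiteHeat t u y) z)
    hU hUR hg (fun l z _ => aestronglyMeasurable_rieszIntegrand _ l z y)
    (fun l => (ae_restrict_iff' measurableSet_Ioi).2
      (.of_forall fun t ht w hw => hM l t w y ht (hUR w hw) hy (hUy w hw)))
    (fun l => .of_forall fun t w _ => by
      have hW := contDiff_iterate_Dh (contDiff_hermiteHeat t y) l
      refine ((hasDerivAt_Dh_sub_mul (hW.differentiable (by simp) w)).const_mul
        (t ^ ((k : ℝ) / 2 - 1))).congr_deriv ?_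
      rw [Function.iterate_succ_apply']
      ring) l hz
  refine (h.const_mul (1 / Gamma ((k : ℝ) / 2))).congr_deriv ?_
  unfold rieszKernelHl
  ring

end RieszKernel

lemma iterate_Dh_Hinv_eq_integral {k : ℕ} (hk : 1 ≤ k) {φ : ℝ → ℝ} (hφ : Continuous φ)
    (hφc : HasCompactSupport φ) {U : Set ℝ} (hU : IsOpen U) {δ R : ℝ} (hδ : 0 < δ)
    (hUR : ∀ z ∈ U, |z| ≤ R) (hφR : ∀ y ∈ tsupport φ, |y| ≤ R)
    (hsep : ∀ z ∈ U, ∀ y ∈ tsupport φ, δ ≤ |z - y|) (l : ℕ) {z : ℝ} (hz : z ∈ U) :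
    Integrable (fun y => rieszKernelHl k l z y * φ y) ∧
      Dh^[l] (Hinv k φ) z = ∫ y, rieszKernelHl k l z y * φ y := by
  obtain ⟨C, hC⟩ := exists_abs_rieszKernelHl_le hk hδ (R := R)
  have hg : Integrable (fun y => ‖φ y‖) := (hφ.integrable_of_hasCompactSupport hφc).norm
  have hmeas : ∀ l, ∀ z ∈ U,
      AEStronglyMeasurable (fun y => rieszKernelHl k l z y * φ y) volume :=
    fun l z _ => (aestronglyMeasurable_rieszKernelHl k l z).mul hφ.aestronglyMeasurable
  have hbound : ∀ l, ∀ᵐ y, ∀ z ∈ U, ‖rieszKernelHl k l z y * φ y‖ ≤ C l * ‖φ y‖ :=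
    fun l => .of_forall fun y z hz => by
      by_cases hy : y ∈ tsupport φ
      · rw [norm_mul]
        exact mul_le_mul_of_nonneg_right (hC l z y (hUR z hz) (hφR y hy) (hsep z hz y hy))
          (norm_nonneg _)
      · simp [image_eq_zero_of_notMem_tsupport hy]
  have hderiv : ∀ l, ∀ᵐ y, ∀ z ∈ U, HasDerivAt (fun z => rieszKernelHl k l z y * φ y)
      (rieszKernelHl k (l + 1) z y * φ y - z * (rieszKernelHl k l z y * φ y)) z :=
    fun l => .of_forall fun y z hz => by
      by_cases hy : y ∈ tsupport φ
      · exact ((hasDerivAt_rieszKernelHl hk hδ hU hUR (hφR y hy) (fun w hw => hsep w hw y hy)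
          l hz).mul_const (φ y)).congr_deriv (by ring)
      · simpa [image_eq_zero_of_notMem_tsupport hy] using hasDerivAt_const z (0 : ℝ)
  exact ⟨integrable_of_ladder hg hmeas hbound l hz,
    iterate_Dh_integral_of_ladder hU hUR hg hmeas hbound hderiv l hz⟩

/-- for `x` outside the support of `φ`, `((d/dx)+x)^k H^{-k/2}φ(x)` is given by an
absolutely convergent integral against the kernel `R^{(k,k)}`. -/
theorem hermite_negative_power_deriv_top (k : ℕ) (hk : 1 ≤ k) (φ : ℝ → ℝ)
    (hφ : ContDiff ℝ (⊤ : ℕ∞) φ) (hφc : HasCompactSupport φ)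
    (x : ℝ) (hx : x ∉ tsupport φ) :
    Integrable (fun y => rieszKernelHl k k x y * φ y) ∧
    Dh^[k] (Hinv k φ) x = ∫ y, rieszKernelHl k k x y * φ y := by
  obtain ⟨ε, hε, hball⟩ := Metric.isOpen_iff.1 (isClosed_tsupport φ).isOpen_compl x hx
  obtain ⟨R, hR⟩ := hφc.isBounded.subset_closedBall 0
  have hUR : ∀ z ∈ Metric.ball x (ε / 2), |z| ≤ max R (|x| + ε) := fun z hz => by
    rw [Metric.mem_ball, Real.dist_eq] at hz
    have := abs_sub_abs_le_abs_sub z x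
    exact le_max_of_le_right (by linarith)
  have hφR : ∀ y ∈ tsupport φ, |y| ≤ max R (|x| + ε) := fun y hy => by
    simpa using le_max_of_le_left (mem_closedBall_zero_iff.1 (hR hy))
  have hsep : ∀ z ∈ Metric.ball x (ε / 2), ∀ y ∈ tsupport φ, ε / 2 ≤ |z - y| := by
    intro z hz y hy
    have hxy : ε ≤ dist y x := not_lt.1 fun h => hball (Metric.mem_ball.2 h) hy
    rw [Metric.mem_ball] at hz
    rw [← Real.dist_eq]
    linarith [dist_triangle y z x, dist_comm y z]
  exact iterate_Dh_Hinv_eq_integral hk hφ.continuous hφc Metric.isOpen_ball (half_pos hε) hUR hφR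
    hsep k (Metric.mem_ball_self (half_pos hε))
end
end

section
/- Let α > -1 and j ∈ ℕ with j ≥ 1. Then for every m ∈ ℕ with 0 ≤ m ≤ ⌊j/2⌋, one has Σ_{n=0}^{m} Σ_{l=2n}^{j} (-1)^{l+n} C(j,l) · (E_{l,n} / 2^{l-2n}) · [α+l-n, m-n] = 0. -/
open MeasureTheory Real Set Filter Topology

/-!
The summand is `(-1)^l C(j,l) P(l)` for the polynomial
`P(x) = ∑_{n ≤ m} (-1)^n / (n! (m-n)!) · x(x-1)⋯(x-2n+1) · q_{m-n}(x + α - n)`,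
where `q_r = hankelMonic r` is monic with `[b, r] = q_r(b) / r!`. Every summand of `P` is a multiple
of a monic polynomial of degree `2m`, and the multipliers add up to `(1-1)^m / m! = 0` when
`m ≥ 1`, so `P` has degree `< 2m ≤ j` (degree `0 < j` if `m = 0`). The `j`-th finite difference
of such a polynomial vanishes.
-/

open Polynomial Finset Nat

lemma Polynomial.sum_range_neg_one_pow_mul_choose_mul_eval_eq_zero {R : Type*} [CommRing R]
    {P : R[X]} {n : ℕ} (hP : P.natDegree < n) :
    ∑ k ∈ range (n + 1), (-1 : R) ^ k * n.choose k * P.eval (k : R) = 0 := by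
  have hΔ := congrFun (fwdDiff_iter_eq_zero_of_degree_lt hP) 0
  rw [fwdDiff_iter_eq_sum_shift] at hΔ
  calc ∑ k ∈ range (n + 1), (-1 : R) ^ k * n.choose k * P.eval (k : R)
      = (-1) ^ n *
          ∑ k ∈ range (n + 1), ((-1 : ℤ) ^ (n - k) * n.choose k) • P.eval (0 + k • 1) := by
        rw [mul_sum]
        refine sum_congr rfl fun k hk => ?_
        have hsign : (-1 : R) ^ k = (-1) ^ n * (-1) ^ (n - k) := by
          rw [← Nat.sub_add_cancel (mem_range_succ_iff.mp hk), pow_add, Nat.add_sub_cancel,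
            mul_comm ((-1 : R) ^ (n - k)), mul_assoc, ← pow_add, Even.neg_one_pow ⟨_, rfl⟩,
            mul_one]
        simp [hsign, zsmul_eq_mul, mul_assoc]
    _ = 0 := by rw [hΔ, Pi.zero_apply, mul_zero]

lemma Polynomial.natDegree_sum_C_mul_le_pred {R : Type*} [CommRing R] {ι : Type*}
    (s : Finset ι) (a : ι → R) (p : ι → R[X]) {d : ℕ}
    (hp : ∀ i ∈ s, (p i).Monic ∧ (p i).natDegree = d) (ha : ∑ i ∈ s, a i = 0) :
    (∑ i ∈ s, C (a i) * p i).natDegree ≤ d - 1 := by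
  refine natDegree_le_pred (natDegree_sum_le_of_forall_le _ _ fun i hi => ?_) ?_
  · exact (natDegree_C_mul_le _ _).trans (hp i hi).2.le
  · rw [finsetSum_coeff]
    refine (sum_congr rfl fun i hi => ?_).trans ha
    rw [coeff_C_mul, ← (hp i hi).2, (hp i hi).1.coeff_natDegree, mul_one]

lemma sum_range_neg_one_pow_div_factorial_mul_factorial {K : Type*} [Field K] [CharZero K]
    {m : ℕ} (hm : m ≠ 0) :
    ∑ n ∈ range (m + 1), (-1 : K) ^ n / (n ! * (m - n)!) = 0 := by
  have hbinom : ∑ n ∈ range (m + 1), (-1 : K) ^ n * m.choose n = 0 := by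
    exact_mod_cast Int.alternating_sum_range_choose_of_ne hm
  rw [← mul_left_inj' (Nat.cast_ne_zero.mpr (factorial_ne_zero m)), zero_mul, sum_mul, ← hbinom]
  refine sum_congr rfl fun n hn => ?_
  rw [Nat.cast_choose K (mem_range_succ_iff.mp hn)]
  field_simp

lemma Econst_div_two_pow {l n : ℕ} (h : 2 * n ≤ l) :
    Econst l n / 2 ^ (l - 2 * n) = l.descFactorial (2 * n) / n ! := by
  have hfact : ((l - 2 * n)! : ℝ) * l.descFactorial (2 * n) = l ! := by
    exact_mod_cast Nat.factorial_mul_descFactorial h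
  rw [Econst, ← hfact]
  field_simp

noncomputable def hankelMonic (r : ℕ) : ℝ[X] :=
  ∏ i ∈ range r, (X ^ 2 - C (((2 * i + 1) / 2 : ℝ) ^ 2))

lemma monic_hankelMonic (r : ℕ) : (hankelMonic r).Monic :=
  monic_prod_of_monic _ _ fun _ _ => monic_X_pow_sub_C _ two_ne_zero

lemma natDegree_hankelMonic (r : ℕ) : (hankelMonic r).natDegree = 2 * r := by
  rw [hankelMonic, natDegree_prod_of_monic _ _ fun _ _ => monic_X_pow_sub_C _ two_ne_zero,
    sum_congr rfl fun _ _ => natDegree_X_pow_sub_C, sum_const, card_range, smul_eq_mul, mul_comm]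

lemma hankel_eq_eval_hankelMonic (b : ℝ) (r : ℕ) :
    hankel b r = (hankelMonic r).eval b / r ! := by
  have hfactor : ∀ i : ℕ, 4 * b ^ 2 - (2 * (i : ℝ) + 1) ^ 2
      = 4 * (b ^ 2 - ((2 * i + 1) / 2) ^ 2) := fun i => by ring
  simp only [hankel, hankelMonic, eval_prod, eval_sub, eval_pow, eval_X, eval_C, hfactor,
    prod_mul_distrib, prod_const, card_range]
  rw [pow_mul, show (2 : ℝ) ^ 2 = 4 by norm_num, mul_div_mul_left _ _ (by positivity)]

noncomputable def hankelSumPoly (α : ℝ) (m n : ℕ) : ℝ[X] :=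
  descPochhammer ℝ (2 * n) * (hankelMonic (m - n)).comp (X + C (α - n))

lemma monic_hankelSumPoly (α : ℝ) (m n : ℕ) : (hankelSumPoly α m n).Monic :=
  (monic_descPochhammer ℝ _).mul ((monic_hankelMonic _).comp_X_add_C _)

lemma natDegree_hankelSumPoly (α : ℝ) {m n : ℕ} (h : n ≤ m) :
    (hankelSumPoly α m n).natDegree = 2 * m := by
  rw [hankelSumPoly,
    (monic_descPochhammer ℝ _).natDegree_mul ((monic_hankelMonic _).comp_X_add_C _),
    descPochhammer_natDegree, natDegree_comp, natDegree_hankelMonic, natDegree_X_add_C]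
  omega

lemma neg_one_pow_mul_Econst_mul_hankel (α : ℝ) (m n l : ℕ) (h : 2 * n ≤ l) :
    (-1 : ℝ) ^ n * (Econst l n / 2 ^ (l - 2 * n)) * hankel (α + l - n) (m - n)
      = (-1) ^ n / (n ! * (m - n)!) * (hankelSumPoly α m n).eval (l : ℝ) := by
  rw [Econst_div_two_pow h, hankel_eq_eval_hankelMonic, hankelSumPoly, eval_mul, eval_comp,
    descPochhammer_eval_eq_descFactorial]
  simp only [eval_add, eval_X, eval_C]
  ring_nf

lemma sum_Icc_eq_sum_range_eval_hankelSumPoly (α : ℝ) (j m n : ℕ) :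
    ∑ l ∈ Finset.Icc (2 * n) j,
      (-1 : ℝ) ^ (l + n) * j.choose l * (Econst l n / 2 ^ (l - 2 * n)) *
        hankel (α + l - n) (m - n) = ∑ l ∈ range (j + 1), (-1 : ℝ) ^ l * j.choose l *
          ((-1) ^ n / (n ! * (m - n)!) * (hankelSumPoly α m n).eval (l : ℝ)) := by
  have hIcc : Finset.Icc (2 * n) j = (range (j + 1)).filter (2 * n ≤ ·) := by
    ext l; simp [and_comm]
  rw [hIcc, sum_filter]
  refine sum_congr rfl fun l _ => ?_
  split_ifs with hl
  · rw [← neg_one_pow_mul_Econst_mul_hankel α m n l hl, pow_add]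
    ring
  · rw [hankelSumPoly, eval_mul, descPochhammer_eval_eq_descFactorial,
      Nat.descFactorial_eq_zero_iff_lt.mpr (not_le.mp hl)]
    simp

theorem hankel_sum_eq_zero_general (α : ℝ) (j : ℕ) (hj : 1 ≤ j)
    (m : ℕ) (hm : m ≤ j / 2) :
    ∑ n ∈ Finset.range (m + 1), ∑ l ∈ Finset.Icc (2 * n) j,
      (-1 : ℝ) ^ (l + n) * (Nat.choose j l) * (Econst l n / 2 ^ (l - 2 * n)) *
        hankel (α + l - n) (m - n) = 0 := by
  set P : ℝ[X] :=
    ∑ n ∈ range (m + 1), C ((-1 : ℝ) ^ n / (n ! * (m - n)!)) * hankelSumPoly α m n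
  have hP : P.natDegree < j := by
    rcases eq_or_ne m 0 with rfl | hm0
    · simp only [P, hankelSumPoly, hankelMonic]
      simpa using Nat.lt_of_lt_of_le zero_lt_one hj
    · have hP_le : P.natDegree ≤ 2 * m - 1 :=
        natDegree_sum_C_mul_le_pred _ _ _
          (fun n hn => ⟨monic_hankelSumPoly α m n,
            natDegree_hankelSumPoly α (mem_range_succ_iff.mp hn)⟩)
          (sum_range_neg_one_pow_div_factorial_mul_factorial hm0)
      omega
  simp_rw [sum_Icc_eq_sum_range_eval_hankelSumPoly, sum_comm (s := range (m + 1)), ← mul_sum]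
  convert sum_range_neg_one_pow_mul_choose_mul_eval_eq_zero hP using 3
  simp [P, eval_finsetSum]

/-- the technical combinatorial lemma on sums of Hankel symbols. -/
theorem hankel_sum_eq_zero (α : ℝ) (hα : -1 < α) (j : ℕ) (hj : 1 ≤ j)
    (m : ℕ) (hm : m ≤ j / 2) :
    ∑ n ∈ Finset.range (m + 1), ∑ l ∈ Finset.Icc (2 * n) j,
      (-1 : ℝ) ^ (l + n) * (Nat.choose j l) * (Econst l n / 2 ^ (l - 2 * n)) *
        hankel (α + l - n) (m - n) = 0 :=
  hankel_sum_eq_zero_general α j hj m hm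
end

section
/- Let α > -1 and j ∈ ℕ. For every t, x, y ∈ (0,∞), writing u = 2xy e^{-t}/(1-e^{-2t}), the j-th derivative in x of the function x ↦ u^{-α} I_α(u) equals Σ_{n=0}^{⌊j/2⌋} E_{j,n} · (x^{j-2n} / 2^{j-n}) · (2y e^{-t}/(1-e^{-2t}))^{2(j-n)} · u^{-α+n-j} · I_{α-n+j}(u). -/
open MeasureTheory Real Set Filter Topology

/-!
For `z > 0` one has `z ^ (-β) * I_β z = F_β (z ^ 2)`, where `F_β w = ∑ aₙ(β) wⁿ` is an entire
power series whose coefficients satisfy `(n + 1) aₙ₊₁(β) = aₙ(β + 1) / 2`, so that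
`F_β' = F_{β+1} / 2`. Hence `g_k x = F_{α+k} ((c x) ^ 2)` satisfies `g_k' x = c² x g_{k+1} x`.
Differentiating `j` times, each derivative either lowers the power of `x` or raises both the index
`k` and the power of `x`; the coefficient of `(c²)^(j-n) x^(j-2n) g_{j-n}` is then the number
`C(j, 2n) (2n-1)‼` of matchings with `n` edges on `j` points, which equals `E_{j,n} / 2^(j-n)`.
-/

open Nat Finset

-- At the poles of `Γ` the junk value `Gamma = 0` makes the coefficient `0`, as `1 / Γ` would.
noncomputable def besselCoeff (β : ℝ) (n : ℕ) : ℝ := 2 ^ (-β) / (4 ^ n * n ! * Gamma (n + β + 1))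

noncomputable def besselSeries (β w : ℝ) : ℝ := ∑' n, besselCoeff β n * w ^ n

lemma besselCoeff_succ_mul (β : ℝ) (n : ℕ) :
    besselCoeff β (n + 1) * (n + 1) = besselCoeff (β + 1) n / 2 := by
  have h2 : (2 : ℝ) ^ (-(β + 1)) = 2 ^ (-β) / 2 := by
    rw [neg_add, rpow_add two_pos, rpow_neg_one, div_eq_mul_inv]
  simp only [besselCoeff, h2, factorial_succ, cast_mul, pow_succ, cast_add, cast_one]
  rw [show (n : ℝ) + 1 + β + 1 = n + (β + 1) + 1 by ring]
  field_simp
  ring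

lemma abs_besselCoeff_le {β : ℝ} {n : ℕ} (hn : 2 ≤ n + β + 1) :
    |besselCoeff β n| ≤ 2 ^ (-β) / (4 ^ n * n !) := by
  have hΓ : 1 ≤ Gamma (n + β + 1) := by
    simpa [Gamma_two] using Gamma_strictMonoOn_Ici.monotoneOn Set.self_mem_Ici hn hn
  rw [besselCoeff, abs_of_nonneg (by positivity)]
  exact div_le_div_of_nonneg_left (by positivity) (by positivity)
    (le_mul_of_one_le_right (by positivity) hΓ)

lemma summable_abs_besselCoeff_mul_pow (β : ℝ) {R : ℝ} (hR : 0 ≤ R) :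
    Summable fun n ↦ |besselCoeff β n| * R ^ n := by
  refine .of_norm_bounded_eventually
    ((Real.summable_pow_div_factorial (R / 4)).mul_left (2 ^ (-β))) ?_
  rw [Nat.cofinite_eq_atTop]
  filter_upwards [eventually_ge_atTop ⌈1 - β⌉₊] with n hn
  have hn : 2 ≤ n + β + 1 := by linarith [Nat.ceil_le.mp hn]
  rw [norm_mul, norm_pow, Real.norm_of_nonneg hR, Real.norm_eq_abs, abs_abs]
  calc |besselCoeff β n| * R ^ n ≤ 2 ^ (-β) / (4 ^ n * n !) * R ^ n := by
        gcongr; exact abs_besselCoeff_le hn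
    _ = _ := by rw [div_pow]; ring

lemma summable_besselCoeff_mul_pow (β w : ℝ) : Summable fun n ↦ besselCoeff β n * w ^ n :=
  .of_abs <| by
    simpa only [abs_mul, abs_pow] using summable_abs_besselCoeff_mul_pow β (abs_nonneg w)

lemma hasDerivAt_besselSeries (β w : ℝ) :
    HasDerivAt (besselSeries β) (besselSeries (β + 1) w / 2) w := by
  set R := |w| + 1
  have hR : 0 < R := by positivity
  have hw : w ∈ Metric.ball 0 R := by simp [R]
  have hu : Summable fun n : ℕ ↦ |besselCoeff β n| * n * R ^ (n - 1) := by
    refine (summable_nat_add_iff 1).mp ?_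
    refine ((summable_abs_besselCoeff_mul_pow (β + 1) hR.le).div_const 2).congr fun n ↦ ?_
    rw [add_tsub_cancel_right, Nat.cast_add_one, ← abs_of_nonneg (by positivity : (0:ℝ) ≤ n + 1),
      ← abs_mul, besselCoeff_succ_mul, abs_div, abs_two]
    ring
  have hbound : ∀ (n : ℕ), ∀ y ∈ Metric.ball (0 : ℝ) R,
      ‖besselCoeff β n * (n * y ^ (n - 1))‖ ≤ |besselCoeff β n| * n * R ^ (n - 1) := by
    intro n y hy
    rw [mem_ball_zero_iff] at hy
    rw [norm_mul, norm_mul, norm_pow, RCLike.norm_natCast, ← mul_assoc, Real.norm_eq_abs]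
    gcongr
  have hderiv := hasDerivAt_tsum_of_isPreconnected hu Metric.isOpen_ball
    (convex_ball 0 R).isPreconnected (fun n y _ ↦ (hasDerivAt_pow n y).const_mul (besselCoeff β n))
    hbound (Metric.mem_ball_self hR) (summable_besselCoeff_mul_pow β 0) hw
  refine hderiv.congr_deriv ?_
  rw [(Summable.of_norm_bounded hu fun n ↦ hbound n w hw).tsum_eq_zero_add, besselSeries,
    ← tsum_div_const]
  simp only [CharP.cast_eq_zero, zero_mul, mul_zero, zero_add, add_tsub_cancel_right]
  congr 1 with n
  rw [mul_div_right_comm, ← besselCoeff_succ_mul]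
  push_cast
  ring

lemma rpow_neg_mul_besselI (β : ℝ) {z : ℝ} (hz : 0 < z) :
    z ^ (-β) * besselI β z = besselSeries β (z ^ 2) := by
  rw [besselI, besselSeries, ← tsum_mul_left]
  congr 1 with n
  rw [rpow_add (by positivity), show 2 * (n : ℝ) = (2 * n : ℕ) by push_cast; ring,
    rpow_natCast, div_rpow hz.le zero_le_two, besselCoeff, rpow_neg hz.le, rpow_neg zero_le_two]
  field_simp
  rw [pow_mul, div_pow, ← mul_pow]
  norm_num

lemma hasDerivAt_besselSeries_mul_sq (β c x : ℝ) :
    HasDerivAt (fun u ↦ besselSeries β ((c * u) ^ 2))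
      (c ^ 2 * x * besselSeries (β + 1) ((c * x) ^ 2)) x := by
  have h := (hasDerivAt_besselSeries β ((c * x) ^ 2)).comp x
    (((hasDerivAt_id x).const_mul c).pow 2)
  refine h.congr_deriv ?_
  simp only [id]
  ring

def pairingCoeff (j n : ℕ) : ℕ := j.choose (2 * n) * (2 * n - 1)‼

lemma pairingCoeff_zero_right (j : ℕ) : pairingCoeff j 0 = 1 := by
  simp [pairingCoeff]

lemma pairingCoeff_eq_zero_of_lt {j n : ℕ} (h : j < 2 * n) : pairingCoeff j n = 0 := by
  simp [pairingCoeff, Nat.choose_eq_zero_of_lt h]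

lemma pairingCoeff_succ_succ (j n : ℕ) :
    pairingCoeff (j + 1) (n + 1) = pairingCoeff j (n + 1) + (j - 2 * n) * pairingCoeff j n := by
  have h₁ : 2 * (n + 1) = 2 * n + 1 + 1 := by ring
  rw [pairingCoeff, pairingCoeff, pairingCoeff, h₁, add_tsub_cancel_right,
    Nat.choose_succ_succ', add_mul, Nat.doubleFactorial_add_one,
    ← mul_assoc (j.choose (2 * n + 1)), Nat.choose_succ_right_eq]
  ring

lemma Nat.factorial_two_mul_eq (n : ℕ) : (2 * n)! = 2 ^ n * n ! * (2 * n - 1)‼ := by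
  cases n with
  | zero => rfl
  | succ n =>
    rw [show 2 * (n + 1) = 2 * n + 1 + 1 by ring, Nat.factorial_eq_mul_doubleFactorial,
      ← show 2 * (n + 1) = 2 * n + 1 + 1 by ring, Nat.doubleFactorial_two_mul]
    rfl

lemma Econst_eq_two_pow_mul_pairingCoeff {j n : ℕ} (h : 2 * n ≤ j) :
    Econst j n = 2 ^ (j - n) * pairingCoeff j n := by
  obtain ⟨k, rfl⟩ := Nat.exists_eq_add_of_le h
  have hchoose := Nat.choose_mul_factorial_mul_factorial h
  rw [Nat.add_sub_cancel_left] at hchoose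
  rw [Econst, pairingCoeff, Nat.add_sub_cancel_left, ← hchoose, Nat.factorial_two_mul_eq,
    show 2 * n + k - n = n + k by omega]
  push_cast
  field_simp
  ring

lemma sum_range_pairingCoeff_succ_mul (j : ℕ) (U : ℕ → ℝ) :
    ∑ m ∈ range (j + 2), (pairingCoeff (j + 1) m : ℝ) * U m =
      ∑ n ∈ range (j + 1),
        ((pairingCoeff j n : ℝ) * U n + (j - 2 * n : ℕ) * pairingCoeff j n * U (n + 1)) := by
  have hshift := sum_range_succ' (fun m ↦ (pairingCoeff j m : ℝ) * U m) (j + 1)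
  rw [sum_range_succ, pairingCoeff_eq_zero_of_lt (by omega), cast_zero, zero_mul, add_zero,
    pairingCoeff_zero_right] at hshift
  rw [sum_add_distrib, hshift, sum_range_succ']
  simp only [pairingCoeff_succ_succ, pairingCoeff_zero_right, cast_add, cast_mul, add_mul,
    sum_add_distrib]
  ring

theorem iteratedDeriv_eq_sum_pairingCoeff {g : ℕ → ℝ → ℝ} {a : ℝ}
    (hg : ∀ k x, HasDerivAt (g k) (a * x * g (k + 1) x) x) (j : ℕ) (x : ℝ) :
    iteratedDeriv j (g 0) x = ∑ n ∈ range (j + 1),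
      (pairingCoeff j n : ℝ) * (a ^ (j - n) * x ^ (j - 2 * n) * g (j - n) x) := by
  induction j generalizing x with
  | zero => simp [pairingCoeff_zero_right]
  | succ j ih =>
    set U : ℕ → ℝ := fun m ↦ a ^ (j + 1 - m) * x ^ (j + 1 - 2 * m) * g (j + 1 - m) x
    have hterm : ∀ n ∈ range (j + 1), HasDerivAt
        (fun y ↦ (pairingCoeff j n : ℝ) * (a ^ (j - n) * y ^ (j - 2 * n) * g (j - n) y))
        ((pairingCoeff j n : ℝ) * U n + (j - 2 * n : ℕ) * pairingCoeff j n * U (n + 1)) x := by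
      intro n hn
      have hnj : n ≤ j := mem_range_succ_iff.mp hn
      have h := (((hasDerivAt_pow (j - 2 * n) x).fun_mul (hg (j - n) x)).const_mul
        (a ^ (j - n))).const_mul (pairingCoeff j n : ℝ)
      simp only [← mul_assoc] at h ⊢
      refine h.congr_deriv ?_
      rcases le_or_gt (2 * n) j with hle | hlt
      · simp only [U, show j + 1 - n = j - n + 1 by omega,
          show j + 1 - 2 * n = j - 2 * n + 1 by omega, show j + 1 - (n + 1) = j - n by omega,
          show j + 1 - 2 * (n + 1) = j - 2 * n - 1 by omega]
        ring
      · simp [pairingCoeff_eq_zero_of_lt hlt]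
    rw [iteratedDeriv_succ, funext ih, (HasDerivAt.fun_sum hterm).deriv]
    exact (sum_range_pairingCoeff_succ_mul j U).symm

theorem iteratedDeriv_bessel_formula_general (α : ℝ) (j : ℕ) (t x y : ℝ)
    (ht : 0 < t) (hx : 0 < x) (hy : 0 < y) :
    iteratedDeriv j
      (fun u : ℝ =>
        (2 * u * y * Real.exp (-t) / (1 - Real.exp (-2 * t))) ^ (-α) *
          besselI α (2 * u * y * Real.exp (-t) / (1 - Real.exp (-2 * t)))) x =
    ∑ n ∈ Finset.range (j / 2 + 1),
      Econst j n * (x ^ (j - 2 * n) / 2 ^ (j - n)) *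
        (2 * y * Real.exp (-t) / (1 - Real.exp (-2 * t))) ^ (2 * (j - n)) *
        (2 * x * y * Real.exp (-t) / (1 - Real.exp (-2 * t))) ^ (-α + (n : ℝ) - (j : ℝ)) *
        besselI (α - n + j) (2 * x * y * Real.exp (-t) / (1 - Real.exp (-2 * t))) := by
  set c := 2 * y * exp (-t) / (1 - exp (-2 * t))
  have hc : 0 < c := div_pos (by positivity) (sub_pos.mpr (Real.exp_lt_one_iff.mpr (by linarith)))
  have harg : ∀ u, 2 * u * y * exp (-t) / (1 - exp (-2 * t)) = c * u := fun u ↦ by ring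
  set g : ℕ → ℝ → ℝ := fun k u ↦ besselSeries (α + k) ((c * u) ^ 2)
  have hg : ∀ k u, HasDerivAt (g k) (c ^ 2 * u * g (k + 1) u) u := fun k u ↦ by
    simpa only [g, cast_add_one, add_assoc] using hasDerivAt_besselSeries_mul_sq (α + k) c u
  have hlocal : (fun u ↦ (2 * u * y * exp (-t) / (1 - exp (-2 * t))) ^ (-α) *
      besselI α (2 * u * y * exp (-t) / (1 - exp (-2 * t)))) =ᶠ[𝓝 x] g 0 := by
    filter_upwards [lt_mem_nhds hx] with u hu
    simp only [g, harg, rpow_neg_mul_besselI α (mul_pos hc hu), cast_zero, add_zero]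
  rw [hlocal.iteratedDeriv_eq, iteratedDeriv_eq_sum_pairingCoeff hg, harg x,
    ← sum_subset (range_subset_range.mpr (by omega : j / 2 + 1 ≤ j + 1))]
  · refine sum_congr rfl fun n hn ↦ ?_
    have h2n : 2 * n ≤ j := by have := mem_range.mp hn; omega
    have hβ : α + ((j - n : ℕ) : ℝ) = α - n + j := by
      push_cast [Nat.cast_sub (by omega : n ≤ j)]; ring
    rw [show -α + (n : ℝ) - j = -(α - n + j) by ring, mul_assoc _ ((c * x) ^ _),
      rpow_neg_mul_besselI _ (mul_pos hc hx), Econst_eq_two_pow_mul_pairingCoeff h2n, pow_mul]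
    simp only [g, hβ]
    field_simp
  · intro n _ hn
    rw [pairingCoeff_eq_zero_of_lt (by simp at hn; omega), cast_zero, zero_mul]

/-- the `j`-th `x`-derivative of `u^{-α} I_α(u)` with `u = 2xy e^{-t}/(1-e^{-2t})`. -/
theorem iteratedDeriv_bessel_formula (α : ℝ) (hα : -1 < α) (j : ℕ) (t x y : ℝ)
    (ht : 0 < t) (hx : 0 < x) (hy : 0 < y) :
    iteratedDeriv j
      (fun u : ℝ =>
        (2 * u * y * Real.exp (-t) / (1 - Real.exp (-2 * t))) ^ (-α) *
          besselI α (2 * u * y * Real.exp (-t) / (1 - Real.exp (-2 * t)))) x =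
    ∑ n ∈ Finset.range (j / 2 + 1),
      Econst j n * (x ^ (j - 2 * n) / 2 ^ (j - n)) *
        (2 * y * Real.exp (-t) / (1 - Real.exp (-2 * t))) ^ (2 * (j - n)) *
        (2 * x * y * Real.exp (-t) / (1 - Real.exp (-2 * t))) ^ (-α + (n : ℝ) - (j : ℝ)) *
        besselI (α - n + j) (2 * x * y * Real.exp (-t) / (1 - Real.exp (-2 * t))) :=
  iteratedDeriv_bessel_formula_general α j t x y ht hx hy
end

section
/- Let k ∈ ℕ, k ≥ 1, and define Φ(x) = (1/Γ(k/2)) ∫_0^{1/2} ((2s)^{k/2-1} / √(πs)) · (d^{k-1}/dx^{k-1})(e^{-x²/(4s)}) ds for x ∈ ℝ. Then there exists a constant C > 0 such that |Φ(x)| ≤ C e^{-x²/4} / √|x| for all x ∈ ℝ \ {0}; in particular Φ ∈ L¹(ℝ). -/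
open MeasureTheory Real Set Filter Topology

/-! Rescaling `u ↦ u / √(2s)` writes the `(k-1)`-st derivative of `e^{-u²/(4s)}` as
`(-1)^{k-1} (2s)^{-(k-1)/2} He_{k-1}(x/√(2s)) e^{-x²/(4s)}` with the probabilists' Hermite
polynomial `He_{k-1}`, and the powers of `s` in the integrand of `Φ` collapse to `1/s`.
Since `|He_{k-1}(y)| ≤ M e^{y²/8}` and `s < 1/2`, the integrand is bounded by
`M e^{-x²/4} · s⁻¹ e^{-x²/(16s)}`, and `s⁻¹ e^{-b/s} ≤ b^{-1/4} s^{-3/4}` (from `t^{1/4} ≤ e^t`)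
leaves `e^{-x²/4} |x|^{-1/2}` times the integrable `s^{-3/4}`. The function
`|x|^{-1/2} e^{-x²/4}` is integrable on `ℝ`, which gives `Φ ∈ L¹`. -/

open Polynomial

open scoped Nat in
lemma abs_pow_le_mul_exp_mul_sq {ε : ℝ} (hε : 0 < ε) (n : ℕ) (y : ℝ) :
    |y| ^ n ≤ (1 + n ! / ε ^ n) * exp (ε * y ^ 2) := by
  have hexp : (ε * y ^ 2) ^ n / n ! ≤ exp (ε * y ^ 2) :=
    pow_div_factorial_le_exp _ (by positivity) n
  have hsq : (|y| ^ n) ^ 2 ≤ n ! / ε ^ n * exp (ε * y ^ 2) := calc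
    (|y| ^ n) ^ 2 = n ! / ε ^ n * ((ε * y ^ 2) ^ n / n !) := by
      rw [← pow_mul, mul_comm n 2, pow_mul, sq_abs, mul_pow]; field_simp
    _ ≤ n ! / ε ^ n * exp (ε * y ^ 2) := by gcongr
  nlinarith [one_le_exp (by positivity : 0 ≤ ε * y ^ 2), sq_nonneg (|y| ^ n - 1)]

lemma Polynomial.exists_abs_eval_le_mul_exp_mul_sq (p : ℝ[X]) {ε : ℝ} (hε : 0 < ε) :
    ∃ M > 0, ∀ y, |p.eval y| ≤ M * exp (ε * y ^ 2) := by
  induction p using Polynomial.induction_on' with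
  | add p q hp hq =>
    obtain ⟨Mp, hMp, hp⟩ := hp
    obtain ⟨Mq, hMq, hq⟩ := hq
    refine ⟨Mp + Mq, by positivity, fun y => ?_⟩
    rw [eval_add, add_mul]
    exact (abs_add_le _ _).trans (add_le_add (hp y) (hq y))
  | monomial n a =>
    refine ⟨(|a| + 1) * (1 + n.factorial / ε ^ n), by positivity, fun y => ?_⟩
    rw [eval_monomial, abs_mul, abs_pow, mul_assoc]
    exact mul_le_mul (by linarith) (abs_pow_le_mul_exp_mul_sq hε n y) (by positivity)
      (by positivity)

lemma iteratedDeriv_exp_neg_sq_div (m : ℕ) {s : ℝ} (hs : 0 < s) (x : ℝ) :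
    iteratedDeriv m (fun u => exp (-u ^ 2 / (4 * s))) x =
      (-1) ^ m * (√(2 * s))⁻¹ ^ m * aeval (x / √(2 * s)) (hermite m) *
        exp (-x ^ 2 / (4 * s)) := by
  set c := (√(2 * s))⁻¹
  have hc : c ^ 2 = (2 * s)⁻¹ := by rw [inv_pow, sq_sqrt (by positivity)]
  have hscale : ∀ u, exp (-u ^ 2 / (4 * s)) = exp (-((c * u) ^ 2 / 2)) := by
    intro u; rw [mul_pow, hc]; field_simp; ring_nf
  have hγ : ContDiff ℝ m fun y : ℝ => exp (-(y ^ 2 / 2)) := by fun_prop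
  rw [funext hscale, iteratedDeriv_comp_const_mul hγ, iteratedDeriv_eq_iterate]
  dsimp only
  rw [deriv_gaussian_eq_hermite_mul_gaussian, ← hscale x, div_eq_inv_mul x]
  ring

lemma rpow_div_sqrt_mul_inv_sqrt_pow {k : ℕ} (hk : 1 ≤ k) {s : ℝ} (hs : 0 < s) :
    (2 * s) ^ ((k : ℝ) / 2 - 1) / √(π * s) * (√(2 * s))⁻¹ ^ (k - 1) = 1 / (√(2 * π) * s) := by
  have h2s : 0 < 2 * s := by positivity
  have hpow : (√(2 * s))⁻¹ ^ (k - 1) = (2 * s) ^ (-((k : ℝ) - 1) / 2) := by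
    rw [sqrt_eq_rpow, ← rpow_neg h2s.le, ← rpow_natCast, ← rpow_mul h2s.le, Nat.cast_sub hk]
    ring_nf
  have hprod : √(2 * s) * √(π * s) = √(2 * π) * s := by
    rw [← sqrt_mul h2s.le, show 2 * s * (π * s) = 2 * π * s ^ 2 by ring,
      sqrt_mul (by positivity), sqrt_sq hs.le]
  rw [hpow, div_mul_eq_mul_div, ← rpow_add h2s, ← hprod,
    show (k : ℝ) / 2 - 1 + -((k : ℝ) - 1) / 2 = -(1 / 2) by ring, rpow_neg h2s.le, ← sqrt_eq_rpow]
  field_simp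

lemma rpow_le_exp {p t : ℝ} (hp0 : 0 ≤ p) (hp1 : p ≤ 1) (ht : 0 ≤ t) : t ^ p ≤ exp t := by
  rcases le_total t 1 with h | h
  · exact (rpow_le_one ht h hp0).trans (one_le_exp ht)
  · calc t ^ p ≤ t ^ (1 : ℝ) := rpow_le_rpow_of_exponent_le h hp1
      _ = t := rpow_one t
      _ ≤ exp t := by linarith [add_one_le_exp t]

lemma inv_mul_exp_neg_div_le {p b s : ℝ} (hp0 : 0 ≤ p) (hp1 : p ≤ 1) (hb : 0 < b) (hs : 0 < s) :
    s⁻¹ * exp (-(b / s)) ≤ b ^ (-p) * s ^ (p - 1) := by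
  have hpeak : (b / s) ^ p * exp (-(b / s)) ≤ 1 := by
    rw [exp_neg, ← div_eq_mul_inv, div_le_one (exp_pos _)]
    exact rpow_le_exp hp0 hp1 (by positivity)
  calc s⁻¹ * exp (-(b / s)) = b ^ (-p) * s ^ (p - 1) * ((b / s) ^ p * exp (-(b / s))) := by
        rw [div_rpow hb.le hs.le, rpow_neg hb.le, rpow_sub_one hs.ne']
        field_simp
    _ ≤ b ^ (-p) * s ^ (p - 1) := mul_le_of_le_one_right (by positivity) hpeak

lemma integral_Ioo_zero_rpow {a r : ℝ} (ha : 0 ≤ a) (hr : -1 < r) :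
    ∫ s in Ioo 0 a, s ^ r = a ^ (r + 1) / (r + 1) := by
  rw [← integral_Ioc_eq_integral_Ioo, ← intervalIntegral.integral_of_le ha,
    integral_rpow (Or.inl hr), zero_rpow (by linarith), sub_zero]

lemma integrable_comp_abs_of_integrableOn_Ioi {E : Type*} [NormedAddCommGroup E] {f : ℝ → E}
    (hf : IntegrableOn f (Ioi 0)) : Integrable fun x => f |x| := by
  rw [← integrableOn_univ, ← Iio_union_Ici (a := 0), integrableOn_union,
    integrableOn_Ici_iff_integrableOn_Ioi]
  constructor
  · have hneg : IntegrableOn (fun x => f (-x)) (Iio 0) :=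
      IntegrableOn.comp_neg_Iio (by rwa [neg_zero])
    exact hneg.congr_fun (fun x hx => by rw [abs_of_neg (mem_Iio.mp hx)]) measurableSet_Iio
  · exact hf.congr_fun (fun x hx => by rw [abs_of_pos (mem_Ioi.mp hx)]) measurableSet_Ioi

lemma integrable_abs_rpow_mul_exp_neg_mul_sq {b s : ℝ} (hb : 0 < b) (hs : -1 < s) :
    Integrable fun x : ℝ => |x| ^ s * exp (-b * x ^ 2) := by
  simpa [sq_abs] using
    integrable_comp_abs_of_integrableOn_Ioi (integrableOn_rpow_mul_exp_neg_mul_sq hb hs)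

noncomputable def phiIntegrand (k : ℕ) (x s : ℝ) : ℝ :=
  (-1) ^ (k - 1) / (√(2 * π) * s) * aeval (x / √(2 * s)) (hermite (k - 1)) *
    exp (-x ^ 2 / (4 * s))

lemma Phi_eq_integral_phiIntegrand {k : ℕ} (hk : 1 ≤ k) (x : ℝ) :
    Phi k x = 1 / Gamma (k / 2) * ∫ s in Ioo 0 (1 / 2), phiIntegrand k x s := by
  rw [Phi]
  congr 1
  refine setIntegral_congr_fun measurableSet_Ioo fun s hs => ?_
  rw [iteratedDeriv_exp_neg_sq_div _ hs.1, phiIntegrand, div_eq_mul_one_div _ (√(2 * π) * s),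
    ← rpow_div_sqrt_mul_inv_sqrt_pow hk hs.1]
  ring

lemma aestronglyMeasurable_Phi {k : ℕ} (hk : 1 ≤ k) : AEStronglyMeasurable (Phi k) := by
  have hF : StronglyMeasurable (Function.uncurry (phiIntegrand k)) := by
    have hsqrt : Measurable fun p : ℝ × ℝ => √(2 * p.2) := (measurable_snd.const_mul 2).sqrt
    refine Measurable.stronglyMeasurable (((measurable_const.div (measurable_snd.const_mul _)).mul
      ((Polynomial.continuous_aeval _).measurable.comp (measurable_fst.div hsqrt))).mul
      ((measurable_fst.pow_const 2).neg.div (measurable_snd.const_mul 4)).exp)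
  rw [funext (Phi_eq_integral_phiIntegrand hk)]
  exact ((hF.integral_prod_right' (ν := volume.restrict (Ioo 0 (1 / 2)))).const_mul
    _).aestronglyMeasurable

lemma abs_phiIntegrand_le {k : ℕ} {M : ℝ}
    (hM : ∀ y, |aeval y (hermite (k - 1))| ≤ M * exp (y ^ 2 / 8))
    {x s : ℝ} (hx : x ≠ 0) (hs : s ∈ Ioo (0 : ℝ) (1 / 2)) :
    |phiIntegrand k x s| ≤ 2 * M / √(2 * π) * (exp (-x ^ 2 / 4) / √|x|) * s ^ (-(3 / 4 : ℝ)) := by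
  obtain ⟨hs0, hs1⟩ := hs
  have hy : (x / √(2 * s)) ^ 2 = x ^ 2 / (2 * s) := by rw [div_pow, sq_sqrt (by positivity)]
  have hexp : exp ((x / √(2 * s)) ^ 2 / 8) * exp (-x ^ 2 / (4 * s))
      ≤ exp (-x ^ 2 / 4) * exp (-(x ^ 2 / 16 / s)) := by
    rw [← exp_add, ← exp_add, hy, exp_le_exp]
    have : x ^ 2 / 4 ≤ x ^ 2 / (8 * s) := by
      rw [div_le_div_iff₀ (by norm_num) (by positivity)]; nlinarith [sq_nonneg x]
    have e : x ^ 2 / (2 * s) / 8 + -x ^ 2 / (4 * s) = -(x ^ 2 / (8 * s)) - x ^ 2 / 16 / s := by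
      field_simp; ring
    linarith
  have hpow : (x ^ 2 / 16) ^ (-(1 / 4 : ℝ)) = 2 / √|x| := by
    have h4 : x ^ 2 / 16 = (√|x| / 2) ^ 4 := by
      rw [div_pow, show √|x| ^ 4 = (√|x| ^ 2) ^ 2 by ring, sq_sqrt (abs_nonneg x), sq_abs]
      norm_num
    rw [h4, ← rpow_natCast, ← rpow_mul (by positivity)]
    norm_num
    rw [rpow_neg_one, inv_div]
  have hM0 : 0 ≤ M := by
    have := hM 0
    nlinarith [abs_nonneg (aeval (0 : ℝ) (hermite (k - 1))), exp_pos ((0 : ℝ) ^ 2 / 8)]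
  calc |phiIntegrand k x s|
      = 1 / (√(2 * π) * s) * |aeval (x / √(2 * s)) (hermite (k - 1))| *
          exp (-x ^ 2 / (4 * s)) := by
        rw [phiIntegrand, abs_mul, abs_mul, abs_div, abs_pow, abs_neg, abs_one, one_pow,
          abs_of_pos (by positivity : 0 < √(2 * π) * s), abs_of_pos (exp_pos _)]
    _ ≤ 1 / (√(2 * π) * s) * (M * exp ((x / √(2 * s)) ^ 2 / 8)) * exp (-x ^ 2 / (4 * s)) := by
        gcongr; exact hM _
    _ = M / √(2 * π) * s⁻¹ * (exp ((x / √(2 * s)) ^ 2 / 8) * exp (-x ^ 2 / (4 * s))) := by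
        ring
    _ ≤ M / √(2 * π) * s⁻¹ * (exp (-x ^ 2 / 4) * exp (-(x ^ 2 / 16 / s))) :=
        mul_le_mul_of_nonneg_left hexp (by positivity)
    _ = M / √(2 * π) * exp (-x ^ 2 / 4) * (s⁻¹ * exp (-(x ^ 2 / 16 / s))) := by ring
    _ ≤ M / √(2 * π) * exp (-x ^ 2 / 4) *
          ((x ^ 2 / 16) ^ (-(1 / 4 : ℝ)) * s ^ ((1 / 4 : ℝ) - 1)) := by
        refine mul_le_mul_of_nonneg_left ?_ (by positivity)
        exact inv_mul_exp_neg_div_le (by norm_num) (by norm_num) (by positivity) hs0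
    _ = _ := by rw [hpow]; norm_num; ring

lemma exists_abs_Phi_le {k : ℕ} (hk : 1 ≤ k) :
    ∃ C > 0, ∀ x ≠ 0, |Phi k x| ≤ C * exp (-x ^ 2 / 4) / √|x| := by
  obtain ⟨M, hM0, hM⟩ :=
    ((hermite (k - 1)).map (algebraMap ℤ ℝ)).exists_abs_eval_le_mul_exp_mul_sq (ε := 1 / 8)
      (by norm_num)
  have hM' : ∀ y, |aeval y (hermite (k - 1))| ≤ M * exp (y ^ 2 / 8) := fun y => by
    rw [← eval_map_algebraMap, div_eq_inv_mul, ← one_div]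
    exact hM y
  have hΓ : 0 < Gamma (k / 2) := Gamma_pos_of_pos (by positivity)
  have hI : ∫ s in Ioo (0 : ℝ) (1 / 2), s ^ (-(3 / 4 : ℝ)) = (1 / 2) ^ (1 / 4 : ℝ) * 4 := by
    rw [integral_Ioo_zero_rpow (by norm_num) (by norm_num)]
    norm_num
    ring
  have hIint : IntegrableOn (fun s : ℝ => s ^ (-(3 / 4 : ℝ))) (Ioo 0 (1 / 2)) :=
    (intervalIntegral.integrableOn_Ioo_rpow_iff (by norm_num)).mpr (by norm_num)
  refine ⟨1 / Gamma (k / 2) * (2 * M / √(2 * π)) * ((1 / 2) ^ (1 / 4 : ℝ) * 4), by positivity,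
    fun x hx => ?_⟩
  rw [Phi_eq_integral_phiIntegrand hk, abs_mul, abs_of_pos (by positivity)]
  calc 1 / Gamma (k / 2) * |∫ s in Ioo 0 (1 / 2), phiIntegrand k x s|
      ≤ 1 / Gamma (k / 2) * ∫ s in Ioo 0 (1 / 2),
          2 * M / √(2 * π) * (exp (-x ^ 2 / 4) / √|x|) * s ^ (-(3 / 4 : ℝ)) := by
        refine mul_le_mul_of_nonneg_left ?_ (by positivity)
        rw [← norm_eq_abs]
        refine norm_integral_le_of_norm_le (hIint.const_mul _) ?_
        exact (ae_restrict_mem measurableSet_Ioo).mono fun s hs => abs_phiIntegrand_le hM' hx hs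
    _ = _ := by rw [integral_const_mul, hI]; ring

/-- pointwise bound for `Φ` and integrability. -/
theorem Phi_bound_and_integrable (k : ℕ) (hk : 1 ≤ k) :
    (∃ C : ℝ, 0 < C ∧ ∀ x : ℝ, x ≠ 0 →
      |Phi k x| ≤ C * Real.exp (-x ^ 2 / 4) / Real.sqrt |x|) ∧
    Integrable (Phi k) := by
  obtain ⟨C, hC, hbound⟩ := exists_abs_Phi_le hk
  refine ⟨⟨C, hC, hbound⟩, ?_⟩
  have hdom := (integrable_abs_rpow_mul_exp_neg_mul_sq (b := 1 / 4) (s := -(1 / 2))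
    (by norm_num) (by norm_num)).const_mul C
  refine hdom.mono' (aestronglyMeasurable_Phi hk) ?_
  filter_upwards [compl_mem_ae_iff.mpr (measure_singleton (0 : ℝ))] with x hx
  rw [norm_eq_abs, rpow_neg (abs_nonneg x), ← sqrt_eq_rpow]
  refine (hbound x hx).trans_eq ?_
  ring_nf
end
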